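/- The partition of the infinite dihedral group D∞ whose parts are the sets {z^i, z^{−i}, z^i s, z^{−i} s} for odd positive integers i, the sets {z^i, z^{−i}} for even integers i ≥ 0, and the sets {z^i s, z^{−i} s} for even integers i ≥ 0, is the partition into basic sets of a Schur ring over D∞. -/

import Mathlib

open scoped BigOperators

/-- A Schur ring over the group `G` with coefficients in the field `F`, presented by its
partition into finite nonempty basic sets. -/
structure SchurRing (F : Type) [Field F] [CharZero F] (G : Type) [Group G] [DecidableEq G] where
  /-- the basic sets -/
  parts : Set (Finset G)
  nonempty : ∀ C ∈ parts, C.Nonempty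
  cover : ∀ g : G, ∃ C ∈ parts, g ∈ C
  eq_or_disjoint : ∀ C ∈ parts, ∀ D ∈ parts, C = D ∨ Disjoint C D
  one_mem : ({1} : Finset G) ∈ parts
  inv_mem : ∀ C ∈ parts, C.image (·⁻¹) ∈ parts
  mul_mem : ∀ C ∈ parts, ∀ D ∈ parts, ∃ S : Finset (Finset G),
    (↑S : Set (Finset G)) ⊆ parts ∧ ∃ coef : Finset G → F,
      (∑ g ∈ C, MonoidAlgebra.single g (1 : F)) * (∑ g ∈ D, MonoidAlgebra.single g (1 : F))
        = ∑ E ∈ S, coef E • ∑ g ∈ E, MonoidAlgebra.single g (1 : F)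

/-- A subset of `G` is an `A`-set if it is a union of basic sets of `A`. -/
def SchurRing.IsASet {F : Type} [Field F] [CharZero F] {G : Type} [Group G] [DecidableEq G]
    (A : SchurRing F G) (X : Set G) : Prop :=
  ∃ 𝒮 : Set (Finset G), 𝒮 ⊆ A.parts ∧ X = ⋃ C ∈ 𝒮, (C : Set G)

/-- The infinite dihedral group, realized as `DihedralGroup 0`. -/
abbrev Dinf : Type := DihedralGroup 0

/-- The generator `z` of infinite order. -/
def zz : Dinf := DihedralGroup.r 1

/-- The reflection `s` of order two. -/
def ss : Dinf := DihedralGroup.sr 0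

/-! The partition is the fibre partition of `Dinf.basicKey`; it contains `{1}` and every part is
closed under inversion. Put `ρ_i = z^i + z^{-i}` and `σ_i = ρ_i s`. The simple quantity of a basic
set is `a ρ_i + b σ_i` with `i` even or `a = b`. As `s` commutes with every `ρ_j` and `s² = 1`,
`(a ρ_i + b σ_i)(c ρ_j + d σ_j) = Σ_{k = i ± j} ((ac + bd) ρ_k + (ad + bc) σ_k)`, and when `i` or
`j` is odd the two coefficients agree, so the product is again a combination of basic quantities. -/

noncomputable def simpleQuantity (F : Type*) [Semiring F] {G : Type*} (C : Finset G) :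
    MonoidAlgebra F G :=
  ∑ g ∈ C, MonoidAlgebra.single g 1

theorem exists_sum_simpleQuantity_of_mem_span {F G : Type*} [Semiring F] {parts : Set (Finset G)}
    {x : MonoidAlgebra F G} (hx : x ∈ Submodule.span F (simpleQuantity F '' parts)) :
    ∃ S : Finset (Finset G), (↑S : Set (Finset G)) ⊆ parts ∧ ∃ coef : Finset G → F,
      x = ∑ E ∈ S, coef E • simpleQuantity F E := by
  obtain ⟨l, hl, rfl⟩ := (Finsupp.mem_span_image_iff_linearCombination F).1 hx
  exact ⟨l.support, hl, l, by rw [Finsupp.linearCombination_apply, Finsupp.sum]⟩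

theorem simpleQuantity_pair {F G : Type*} [Semiring F] [DecidableEq G] {g h : G} (hgh : g ≠ h) :
    simpleQuantity F {g, h} = MonoidAlgebra.single g 1 + MonoidAlgebra.single h 1 :=
  Finset.sum_pair hgh

theorem exists_simpleQuantity_pair_eq_smul {F G : Type*} [Semiring F] [Invertible (2 : F)]
    [DecidableEq G] (g h : G) :
    ∃ a : F,
      simpleQuantity F {g, h} = a • (MonoidAlgebra.single g 1 + MonoidAlgebra.single h 1) := by
  rcases eq_or_ne g h with rfl | hgh
  · refine ⟨⅟2, ?_⟩
    rw [← two_smul F, smul_smul, invOf_mul_self, one_smul, Finset.pair_eq_singleton]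
    exact Finset.sum_singleton _ _
  · exact ⟨1, by rw [one_smul, simpleQuantity_pair hgh]⟩

theorem single_add_single_mem_span_simpleQuantity_pair {F G : Type*} [Semiring F]
    [DecidableEq G] (g h : G) :
    MonoidAlgebra.single g 1 + MonoidAlgebra.single h 1 ∈ F ∙ simpleQuantity F {g, h} := by
  rcases eq_or_ne g h with rfl | hgh
  · refine Submodule.mem_span_singleton.2 ⟨2, ?_⟩
    rw [two_smul, Finset.pair_eq_singleton, simpleQuantity, Finset.sum_singleton]
  · rw [← simpleQuantity_pair hgh]
    exact Submodule.mem_span_singleton_self _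

theorem Finset.eq_or_disjoint_of_forall_mem_iff {α β : Type*} {f : α → β} {C D : Finset α}
    {v w : β} (hC : ∀ g, g ∈ C ↔ f g = v) (hD : ∀ g, g ∈ D ↔ f g = w) : C = D ∨ Disjoint C D := by
  refine or_iff_not_imp_right.2 fun h => ?_
  obtain ⟨g, hgC, hgD⟩ := Finset.not_disjoint_iff.1 h
  have hvw : v = w := ((hC g).1 hgC).symm.trans ((hD g).1 hgD)
  ext x
  rw [hC, hD, hvw]

theorem setOf_exists_nonneg {α : Type*} {P : ℤ → Prop} {f : ℤ → α} (hP : ∀ i, P i → P (-i))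
    (hf : ∀ i, f (-i) = f i) :
    {x | ∃ i, P i ∧ 0 ≤ i ∧ x = f i} = {x | ∃ i, P i ∧ x = f i} := by
  ext x
  refine ⟨fun ⟨i, hi, _, h⟩ => ⟨i, hi, h⟩, fun ⟨i, hi, h⟩ => ?_⟩
  rcases le_total 0 i with h0 | h0
  exacts [⟨i, hi, h0, h⟩, ⟨-i, hP i hi, neg_nonneg.2 h0, h.trans (hf i).symm⟩]

namespace Dinf

def r (i : ℤ) : Dinf := DihedralGroup.r i

def sr (i : ℤ) : Dinf := DihedralGroup.sr i

@[simp] theorem r_mul_r (i j : ℤ) : r i * r j = r (i + j) := rfl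
@[simp] theorem r_mul_sr (i j : ℤ) : r i * sr j = sr (j - i) := rfl
@[simp] theorem sr_mul_r (i j : ℤ) : sr i * r j = sr (i + j) := rfl
@[simp] theorem sr_mul_sr (i j : ℤ) : sr i * sr j = r (j - i) := rfl
@[simp] theorem r_inv (i : ℤ) : (r i)⁻¹ = r (-i) := rfl
@[simp] theorem sr_inv (i : ℤ) : (sr i)⁻¹ = sr i := rfl
@[simp] theorem one_eq_r_zero : (1 : Dinf) = r 0 := rfl

@[simp] theorem r_inj {i j : ℤ} : r i = r j ↔ i = j := ⟨fun h => by injection h, congrArg r⟩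
@[simp] theorem sr_inj {i j : ℤ} : sr i = sr j ↔ i = j := ⟨fun h => by injection h, congrArg sr⟩
@[simp] theorem r_ne_sr (i j : ℤ) : r i ≠ sr j := fun h => by injection h
@[simp] theorem sr_ne_r (i j : ℤ) : sr i ≠ r j := fun h => by injection h

theorem forall_dinf {p : Dinf → Prop} : (∀ g, p g) ↔ (∀ i, p (r i)) ∧ ∀ i, p (sr i) :=
  ⟨fun h => ⟨fun i => h _, fun i => h _⟩, fun ⟨hr, hsr⟩ g => by cases g; exacts [hr _, hsr _]⟩

@[simp] theorem zz_zpow (i : ℤ) : zz ^ i = r i := by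
  induction i using Int.induction_on with
  | zero => rfl
  | succ k ih => rw [zpow_add, ih]; rfl
  | pred k ih => rw [sub_eq_add_neg, zpow_add, ih]; rfl

@[simp] theorem r_mul_ss (i : ℤ) : r i * ss = sr (-i) := by
  change r i * sr 0 = _
  simp

def rPair (i : ℤ) : Finset Dinf := {r i, r (-i)}

def srPair (i : ℤ) : Finset Dinf := {sr i, sr (-i)}

def quad (i : ℤ) : Finset Dinf := rPair i ∪ srPair i

def basicSets : Set (Finset Dinf) :=
  {C | (∃ i, Odd i ∧ C = quad i) ∨ (∃ i, Even i ∧ C = rPair i) ∨ ∃ i, Even i ∧ C = srPair i}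

theorem rPair_neg (i : ℤ) : rPair (-i) = rPair i := by
  simp [rPair, Finset.pair_comm]

theorem srPair_neg (i : ℤ) : srPair (-i) = srPair i := by
  simp [srPair, Finset.pair_comm]

theorem quad_neg (i : ℤ) : quad (-i) = quad i := by
  rw [quad, quad, rPair_neg, srPair_neg]

theorem basicSets_eq : basicSets =
    {C : Finset Dinf | ∃ i : ℤ, Odd i ∧ 0 < i ∧
        C = {zz ^ i, zz ^ (-i), zz ^ i * ss, zz ^ (-i) * ss}} ∪
      {C : Finset Dinf | ∃ i : ℤ, Even i ∧ 0 ≤ i ∧ C = {zz ^ i, zz ^ (-i)}} ∪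
      {C : Finset Dinf | ∃ i : ℤ, Even i ∧ 0 ≤ i ∧ C = {zz ^ i * ss, zz ^ (-i) * ss}} := by
  have hquad (i : ℤ) :
      ({zz ^ i, zz ^ (-i), zz ^ i * ss, zz ^ (-i) * ss} : Finset Dinf) = quad i := by
    ext; simp [quad, rPair, srPair]; tauto
  have hrPair (i : ℤ) : ({zz ^ i, zz ^ (-i)} : Finset Dinf) = rPair i := by simp [rPair]
  have hsrPair (i : ℤ) : ({zz ^ i * ss, zz ^ (-i) * ss} : Finset Dinf) = srPair i := by
    simp [srPair, Finset.pair_comm]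
  have hpos {i : ℤ} (hi : Odd i) : 0 < i ↔ 0 ≤ i := by
    obtain ⟨k, rfl⟩ := hi; omega
  simp only [hquad]
  simp only [hrPair, hsrPair]
  rw [Set.ext fun C => exists_congr fun i => and_congr_right fun hi => and_congr_left' (hpos hi),
    setOf_exists_nonneg (fun _ h => h.neg) quad_neg,
    setOf_exists_nonneg (fun _ h => h.neg) rPair_neg,
    setOf_exists_nonneg (fun _ h => h.neg) srPair_neg]
  ext C
  simp [basicSets, or_assoc]

/-- The basic sets are the fibres of `basicKey`: the second coordinate is `0` for `r i` and `1`
for `sr i` when `i` is even, and `2` for both when `i` is odd. -/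
def basicKey : Dinf → ℕ × ℤ
  | .r i => (Int.natAbs i, 2 * Int.emod i 2)
  | .sr i => (Int.natAbs i, 1 + Int.emod i 2)

@[simp] theorem basicKey_r (i : ℤ) : basicKey (r i) = (i.natAbs, 2 * (i % 2)) := rfl

@[simp] theorem basicKey_sr (i : ℤ) : basicKey (sr i) = (i.natAbs, 1 + i % 2) := rfl

theorem mem_rPair_iff {i : ℤ} (hi : Even i) (g : Dinf) :
    g ∈ rPair i ↔ basicKey g = (i.natAbs, 0) := by
  revert g
  rw [forall_dinf]
  obtain ⟨k, rfl⟩ := hi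
  constructor <;> intro j <;> simp [rPair] <;> omega

theorem mem_srPair_iff {i : ℤ} (hi : Even i) (g : Dinf) :
    g ∈ srPair i ↔ basicKey g = (i.natAbs, 1) := by
  revert g
  rw [forall_dinf]
  obtain ⟨k, rfl⟩ := hi
  constructor <;> intro j <;> simp [srPair] <;> omega

theorem mem_quad_iff {i : ℤ} (hi : Odd i) (g : Dinf) :
    g ∈ quad i ↔ basicKey g = (i.natAbs, 2) := by
  revert g
  rw [forall_dinf]
  obtain ⟨k, rfl⟩ := hi
  constructor <;> intro j <;> simp [quad, rPair, srPair] <;> omega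

theorem exists_forall_mem_iff_basicKey {C : Finset Dinf} (hC : C ∈ basicSets) :
    ∃ v, ∀ g, g ∈ C ↔ basicKey g = v := by
  rcases hC with ⟨i, hi, rfl⟩ | ⟨i, hi, rfl⟩ | ⟨i, hi, rfl⟩
  exacts [⟨_, mem_quad_iff hi⟩, ⟨_, mem_rPair_iff hi⟩, ⟨_, mem_srPair_iff hi⟩]

theorem eq_or_disjoint_of_mem_basicSets {C D : Finset Dinf} (hC : C ∈ basicSets)
    (hD : D ∈ basicSets) : C = D ∨ Disjoint C D := by
  obtain ⟨v, hv⟩ := exists_forall_mem_iff_basicKey hC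
  obtain ⟨w, hw⟩ := exists_forall_mem_iff_basicKey hD
  exact Finset.eq_or_disjoint_of_forall_mem_iff hv hw

theorem nonempty_of_mem_basicSets {C : Finset Dinf} (hC : C ∈ basicSets) : C.Nonempty := by
  rcases hC with ⟨i, -, rfl⟩ | ⟨i, -, rfl⟩ | ⟨i, -, rfl⟩
  exacts [⟨r i, by simp [quad, rPair]⟩, ⟨r i, by simp [rPair]⟩, ⟨sr i, by simp [srPair]⟩]

theorem exists_mem_basicSets (g : Dinf) : ∃ C ∈ basicSets, g ∈ C := by
  revert g
  rw [forall_dinf]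
  constructor <;> intro i <;> rcases Int.even_or_odd i with hi | hi
  · exact ⟨rPair i, Or.inr (Or.inl ⟨i, hi, rfl⟩), by simp [rPair]⟩
  · exact ⟨quad i, Or.inl ⟨i, hi, rfl⟩, by simp [quad, rPair]⟩
  · exact ⟨srPair i, Or.inr (Or.inr ⟨i, hi, rfl⟩), by simp [srPair]⟩
  · exact ⟨quad i, Or.inl ⟨i, hi, rfl⟩, by simp [quad, srPair]⟩

theorem singleton_one_mem_basicSets : {1} ∈ basicSets :=
  Or.inr (Or.inl ⟨0, Even.zero, by simp [rPair]⟩)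

theorem image_inv_of_mem_basicSets {C : Finset Dinf} (hC : C ∈ basicSets) :
    C.image (·⁻¹) = C := by
  rcases hC with ⟨i, -, rfl⟩ | ⟨i, -, rfl⟩ | ⟨i, -, rfl⟩ <;> ext g <;> revert g <;>
    rw [forall_dinf] <;> constructor <;> intro j <;> simp [quad, rPair, srPair] <;> omega

section GroupAlgebra

variable (F : Type*) [CommSemiring F]

noncomputable def rho (i : ℤ) : MonoidAlgebra F Dinf :=
  MonoidAlgebra.single (r i) 1 + MonoidAlgebra.single (r (-i)) 1

noncomputable def sigma (i : ℤ) : MonoidAlgebra F Dinf :=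
  MonoidAlgebra.single (sr i) 1 + MonoidAlgebra.single (sr (-i)) 1

noncomputable def rhoSigma (a b : F) (i : ℤ) : MonoidAlgebra F Dinf :=
  a • rho F i + b • sigma F i

theorem rho_mul_rho (i j : ℤ) : rho F i * rho F j = rho F (i + j) + rho F (i - j) := by
  simp only [rho, add_mul, mul_add, MonoidAlgebra.single_mul_single, one_mul, r_mul_r]
  ring_nf; abel

theorem rho_mul_sigma (i j : ℤ) : rho F i * sigma F j = sigma F (i + j) + sigma F (i - j) := by
  simp only [rho, sigma, add_mul, mul_add, MonoidAlgebra.single_mul_single, one_mul, r_mul_sr]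
  ring_nf; abel

theorem sigma_mul_rho (i j : ℤ) : sigma F i * rho F j = sigma F (i + j) + sigma F (i - j) := by
  simp only [rho, sigma, add_mul, mul_add, MonoidAlgebra.single_mul_single, one_mul, sr_mul_r]
  ring_nf; abel

theorem sigma_mul_sigma (i j : ℤ) : sigma F i * sigma F j = rho F (i + j) + rho F (i - j) := by
  simp only [rho, sigma, add_mul, mul_add, MonoidAlgebra.single_mul_single, one_mul, sr_mul_sr]
  ring_nf; abel

theorem rhoSigma_mul_rhoSigma (a b c d : F) (i j : ℤ) :
    rhoSigma F a b i * rhoSigma F c d j =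
      rhoSigma F (a * c + b * d) (a * d + b * c) (i + j) +
        rhoSigma F (a * c + b * d) (a * d + b * c) (i - j) := by
  simp only [rhoSigma, add_mul, mul_add, smul_mul_smul_comm, rho_mul_rho, rho_mul_sigma,
    sigma_mul_rho, sigma_mul_sigma]
  module

theorem simpleQuantity_quad {i : ℤ} (hi : Odd i) :
    simpleQuantity F (quad i) = rho F i + sigma F i := by
  have hi0 : i ≠ -i := by obtain ⟨k, rfl⟩ := hi; omega
  rw [simpleQuantity, quad, Finset.sum_union (by simp [rPair, srPair]), rPair, srPair,
    ← simpleQuantity, ← simpleQuantity, simpleQuantity_pair (by simpa using hi0),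
    simpleQuantity_pair (by simpa using hi0), rho, sigma]

theorem exists_rhoSigma_of_mem_basicSets [Invertible (2 : F)] {C : Finset Dinf}
    (hC : C ∈ basicSets) :
    ∃ (a b : F) (i : ℤ), (Even i ∨ a = b) ∧ simpleQuantity F C = rhoSigma F a b i := by
  rcases hC with ⟨i, hi, rfl⟩ | ⟨i, hi, rfl⟩ | ⟨i, hi, rfl⟩
  · exact ⟨1, 1, i, Or.inr rfl, by rw [simpleQuantity_quad F hi, rhoSigma, one_smul, one_smul]⟩
  · obtain ⟨a, ha⟩ := exists_simpleQuantity_pair_eq_smul (F := F) (r i) (r (-i))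
    exact ⟨a, 0, i, Or.inl hi, by rw [rPair, ha, rhoSigma, zero_smul, add_zero, rho]⟩
  · obtain ⟨b, hb⟩ := exists_simpleQuantity_pair_eq_smul (F := F) (sr i) (sr (-i))
    exact ⟨0, b, i, Or.inl hi, by rw [srPair, hb, rhoSigma, zero_smul, zero_add, sigma]⟩

theorem rhoSigma_mem_span {a b : F} {i : ℤ} (h : Even i ∨ a = b) :
    rhoSigma F a b i ∈ Submodule.span F (simpleQuantity F '' basicSets) := by
  have hmem {C : Finset Dinf} (hC : C ∈ basicSets) :
      F ∙ simpleQuantity F C ≤ Submodule.span F (simpleQuantity F '' basicSets) :=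
    Submodule.span_mono (by simpa using Set.mem_image_of_mem _ hC)
  rcases Int.even_or_odd i with hi | hi
  · refine add_mem (Submodule.smul_mem _ _ ?_) (Submodule.smul_mem _ _ ?_)
    · exact hmem (Or.inr (Or.inl ⟨i, hi, rfl⟩))
        (single_add_single_mem_span_simpleQuantity_pair _ _)
    · exact hmem (Or.inr (Or.inr ⟨i, hi, rfl⟩))
        (single_add_single_mem_span_simpleQuantity_pair _ _)
  · obtain rfl : a = b := h.resolve_left (Int.not_even_iff_odd.2 hi)
    rw [rhoSigma, ← smul_add, ← simpleQuantity_quad F hi]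
    exact Submodule.smul_mem _ _ (Submodule.subset_span ⟨_, Or.inl ⟨i, hi, rfl⟩, rfl⟩)

theorem mul_mem_span_of_mem_basicSets [Invertible (2 : F)] {C D : Finset Dinf}
    (hC : C ∈ basicSets) (hD : D ∈ basicSets) :
    simpleQuantity F C * simpleQuantity F D ∈ Submodule.span F (simpleQuantity F '' basicSets) := by
  obtain ⟨a, b, i, hab, hC⟩ := exists_rhoSigma_of_mem_basicSets F hC
  obtain ⟨c, d, j, hcd, hD⟩ := exists_rhoSigma_of_mem_basicSets F hD
  have hadm (k : ℤ) (hk : Even i → Even j → Even k) :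
      Even k ∨ a * c + b * d = a * d + b * c := by
    rcases hab with hi | rfl
    · rcases hcd with hj | rfl
      · exact Or.inl (hk hi hj)
      · right; ring
    · right; ring
  rw [hC, hD, rhoSigma_mul_rhoSigma]
  exact add_mem (rhoSigma_mem_span F (hadm _ Even.add)) (rhoSigma_mem_span F (hadm _ Even.sub))

end GroupAlgebra

end Dinf

/-- The partition of `D∞` into the sets `{z^i, z^(-i), z^i s, z^(-i) s}` for odd positive `i`,
the sets `{z^i, z^(-i)}` for even `i ≥ 0`, and the sets `{z^i s, z^(-i) s}` for even `i ≥ 0`,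
is the partition into basic sets of a Schur ring over `D∞`. -/
theorem stmt_12 (F : Type) [Field F] [CharZero F] :
    ∃ A : SchurRing F Dinf, A.parts =
      {C : Finset Dinf | ∃ i : ℤ, Odd i ∧ 0 < i ∧
          C = {zz ^ i, zz ^ (-i), zz ^ i * ss, zz ^ (-i) * ss}} ∪
      {C : Finset Dinf | ∃ i : ℤ, Even i ∧ 0 ≤ i ∧ C = {zz ^ i, zz ^ (-i)}} ∪
      {C : Finset Dinf | ∃ i : ℤ, Even i ∧ 0 ≤ i ∧ C = {zz ^ i * ss, zz ^ (-i) * ss}} := by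
  open Dinf in
  exact ⟨{ parts := basicSets
           nonempty := fun _ => nonempty_of_mem_basicSets
           cover := exists_mem_basicSets
           eq_or_disjoint := fun _ hC _ hD => eq_or_disjoint_of_mem_basicSets hC hD
           one_mem := singleton_one_mem_basicSets
           inv_mem := fun C hC => (image_inv_of_mem_basicSets hC).symm ▸ hC
           mul_mem := fun _ hC _ hD =>
             exists_sum_simpleQuantity_of_mem_span (mul_mem_span_of_mem_basicSets F hC hD) },
    basicSets_eq⟩
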